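/- arXiv:1812.02955 — 2 statements merged into one kernel-verified Lean document; each statement's English description precedes it below -/
import Mathlib

section
/- For positive integers k and r, as an identity of formal power series over ℚ, Σ_{n≥0} S(n,k,r) · z^n/n! = (exp(z) − 1)^{r+k−1} / r!, where exp(z) denotes the formal exponential power series Σ_{n≥0} z^n/n!. -/
/-!
Write `t = r + k - 1`. A surjection `Fin n → Fin t` is the same as an ordered partition of
`Fin n` into `t` labelled nonempty blocks. Reading the blocks with the last `k - 1` labels as the
tuple `(B_2, …, B_k)` and forgetting the labels of the remaining `r` blocks is an `r!`-to-one map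
onto the configurations counted by `S(n, k, r)`, so there are `r! · S(n, k, r)` such surjections.

It remains to see that the exponential generating function `A_t` of surjections onto `Fin t` is
`(exp z - 1)^t`. Every function to `Fin t` is a surjection onto its image, so
`t^n = ∑_j C(t, j) · #surj(n, j)`, that is `exp^t = ∑_j C(t, j) • A_j`. The binomial theorem gives
`exp^t = ((exp - 1) + 1)^t = ∑_j C(t, j) • (exp - 1)^j`, and such binomial transforms determine
the sequence, whence `A_j = (exp - 1)^j`.
-/

open Finset Function PowerSeries
open scoped Nat

/-- The mixed Stirling number of the second kind `S(n, k, r)`: the number of pairs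
`(π, (B_2, …, B_k))` where `B_2, …, B_k` are pairwise disjoint nonempty subsets of `{1, …, n}`
and `π` is a partition of the complement of their union into exactly `r` nonempty blocks. -/
noncomputable def mixedStirling (n k r : ℕ) : ℕ :=
  Nat.card {x : Σ B : Fin (k - 1) → Finset (Fin n),
      Finpartition ((Finset.univ : Finset (Fin n)) \ Finset.univ.biUnion B) //
    (∀ i, (x.1 i).Nonempty) ∧
    (∀ i j, i ≠ j → Disjoint (x.1 i) (x.1 j)) ∧
    x.2.parts.card = r}

theorem eq_of_sum_range_choose_nsmul_eq {M : Type*} [AddCancelCommMonoid M] {X Y : ℕ → M}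
    (h : ∀ t, ∑ j ∈ range (t + 1), t.choose j • X j = ∑ j ∈ range (t + 1), t.choose j • Y j) :
    X = Y := by
  funext t
  induction t using Nat.strong_induction_on with
  | _ t ih =>
    have ht := h t
    rw [sum_range_succ, sum_range_succ, Nat.choose_self, one_smul, one_smul,
      sum_congr rfl fun j hj => by rw [ih j (mem_range.1 hj)]] at ht
    exact add_left_cancel ht

theorem pow_eq_sum_choose_nsmul_sub_one_pow {R : Type*} [CommRing R] (x : R) (t : ℕ) :
    x ^ t = ∑ j ∈ range (t + 1), t.choose j • (x - 1) ^ j := by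
  conv_lhs => rw [← sub_add_cancel x 1, add_pow]
  simp [nsmul_eq_mul, mul_comm]

section Surjections

variable {α β γ : Type*}

theorem card_surjective_congr (e : β ≃ γ) :
    Nat.card {f : α → β // Surjective f} = Nat.card {f : α → γ // Surjective f} :=
  Nat.card_congr <| ((Equiv.refl α).arrowCongr e).subtypeEquiv fun f => (e.comp_surjective f).symm

def imageEqEquivSurjective [Fintype α] [DecidableEq β] (s : Finset β) :
    {f : α → β // univ.image f = s} ≃ {g : α → s // Surjective g} where
  toFun f := ⟨fun a => ⟨f.1 a, by obtain ⟨f, rfl⟩ := f; exact mem_image_of_mem _ (mem_univ a)⟩,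
    fun b => by
      obtain ⟨f, rfl⟩ := f
      obtain ⟨a, -, ha⟩ := mem_image.1 b.2
      exact ⟨a, Subtype.ext ha⟩⟩
  invFun g := ⟨fun a => g.1 a, by
    ext b
    simp only [mem_image, mem_univ, true_and]
    exact ⟨fun ⟨a, ha⟩ => ha ▸ (g.1 a).2, fun hb => (g.2 ⟨b, hb⟩).imp fun a ha => by rw [ha]⟩⟩
  left_inv _ := rfl
  right_inv _ := rfl

theorem card_fun_eq_sum_card_surjective [Fintype α] [Fintype β] [DecidableEq β] :
    Nat.card (α → β) = ∑ s : Finset β, Nat.card {g : α → s // Surjective g} := by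
  rw [← Nat.card_congr (Equiv.sigmaFiberEquiv fun f : α → β => univ.image f), Nat.card_sigma]
  exact sum_congr rfl fun s _ => Nat.card_congr (imageEqEquivSurjective s)

end Surjections

theorem pow_eq_sum_choose_mul_card_surjective (n t : ℕ) :
    t ^ n = ∑ j ∈ range (t + 1), t.choose j * Nat.card {f : Fin n → Fin j // Surjective f} :=
  calc t ^ n = Nat.card (Fin n → Fin t) := by simp
    _ = ∑ s ∈ (univ : Finset (Fin t)).powerset,
          Nat.card {f : Fin n → Fin s.card // Surjective f} := by
      rw [card_fun_eq_sum_card_surjective, powerset_univ]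
      simp only [card_surjective_congr (Finset.equivFin _)]
    _ = _ := by
      rw [sum_powerset_apply_card (fun j => Nat.card {f : Fin n → Fin j // Surjective f}),
        card_univ, Fintype.card_fin]
      simp only [smul_eq_mul]

noncomputable def surjectionEGF (t : ℕ) : PowerSeries ℚ :=
  mk fun n => (Nat.card {f : Fin n → Fin t // Surjective f} : ℚ) / n !

theorem exp_pow_eq_sum_choose_nsmul_surjectionEGF (t : ℕ) :
    exp ℚ ^ t = ∑ j ∈ range (t + 1), t.choose j • surjectionEGF j := by
  ext n
  rw [exp_pow_eq_rescale_exp, coeff_rescale, coeff_exp, Algebra.algebraMap_self_apply,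
    ← Nat.cast_pow, pow_eq_sum_choose_mul_card_surjective, Nat.cast_sum, sum_mul, map_sum]
  refine sum_congr rfl fun j _ => ?_
  rw [map_nsmul, surjectionEGF, coeff_mk, nsmul_eq_mul, Nat.cast_mul]
  ring

theorem surjectionEGF_eq_exp_sub_one_pow (t : ℕ) : surjectionEGF t = (exp ℚ - 1) ^ t :=
  congrFun (eq_of_sum_range_choose_nsmul_eq fun t => by
    rw [← exp_pow_eq_sum_choose_nsmul_surjectionEGF,
      ← pow_eq_sum_choose_nsmul_sub_one_pow]) t

section OrderedPartition

variable {α ι κ : Type*} [DecidableEq α]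

def IsOrderedPartition [Fintype ι] (s : Finset α) (C : ι → Finset α) : Prop :=
  (∀ i, (C i).Nonempty) ∧ (∀ i j, i ≠ j → Disjoint (C i) (C j)) ∧ univ.biUnion C = s

namespace IsOrderedPartition

variable [Fintype ι] {s : Finset α} {C : ι → Finset α}

theorem injective (h : IsOrderedPartition s C) : Injective C := by
  intro i j hij
  by_contra hne
  obtain ⟨a, ha⟩ := h.1 i
  exact disjoint_left.1 (h.2.1 i j hne) ha (hij ▸ ha)

theorem existsUnique_mem (h : IsOrderedPartition s C) {a : α} (ha : a ∈ s) : ∃! i, a ∈ C i := by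
  obtain ⟨i, -, hi⟩ := mem_biUnion.1 (h.2.2 ▸ ha)
  exact ⟨i, hi, fun j hj => by_contra fun hji => disjoint_left.1 (h.2.1 j i hji) hj hi⟩

def toFinpartition (h : IsOrderedPartition s C) : Finpartition s where
  parts := univ.image C
  supIndep := by
    rw [supIndep_iff_pairwiseDisjoint]
    rintro _ hp _ hq hpq
    obtain ⟨i, -, rfl⟩ := mem_image.1 hp
    obtain ⟨j, -, rfl⟩ := mem_image.1 hq
    exact h.2.1 i j (ne_of_apply_ne C hpq)
  sup_parts := by rw [sup_image, id_comp, sup_eq_biUnion, h.2.2]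
  bot_notMem := by
    rw [mem_image]
    rintro ⟨i, -, hi⟩
    exact (h.1 i).ne_empty hi

theorem card_parts_toFinpartition (h : IsOrderedPartition s C) :
    h.toFinpartition.parts.card = Fintype.card ι :=
  card_image_of_injective _ h.injective

theorem mem_parts_iff_of_toFinpartition_eq (h : IsOrderedPartition s C) {π : Finpartition s}
    (hπ : h.toFinpartition = π) {p : Finset α} : p ∈ π.parts ↔ ∃ i, C i = p := by
  subst hπ
  simp [toFinpartition]

end IsOrderedPartition

theorem image_univ_coe_equiv [Fintype ι] (P : Finset (Finset α)) (e : ι ≃ P) :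
    univ.image (fun i => (e i : Finset α)) = P := by
  ext p
  simp only [mem_image, mem_univ, true_and]
  exact ⟨fun ⟨i, hi⟩ => hi ▸ (e i).2, fun hp => ⟨e.symm ⟨p, hp⟩, by simp⟩⟩

theorem Finpartition.isOrderedPartition_coe_equiv [Fintype ι] {s : Finset α}
    (π : Finpartition s) (e : ι ≃ π.parts) : IsOrderedPartition s (fun i => (e i : Finset α)) := by
  refine ⟨fun i => π.nonempty_of_mem_parts (e i).2, fun i j hij => ?_, ?_⟩
  · exact π.disjoint (e i).2 (e j).2 fun h => hij (e.injective (Subtype.ext h))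
  · have h := π.sup_parts
    rwa [← image_univ_coe_equiv π.parts e, sup_image, id_comp, sup_eq_biUnion] at h

noncomputable def toFinpartitionFiberEquiv [Fintype ι] {s : Finset α} (π : Finpartition s) :
    {C : {C : ι → Finset α // IsOrderedPartition s C} // C.2.toFinpartition = π} ≃
      (ι ≃ π.parts) where
  toFun C := Equiv.ofBijective
    (fun i => ⟨C.1.1 i, (C.1.2.mem_parts_iff_of_toFinpartition_eq C.2).2 ⟨i, rfl⟩⟩)
    ⟨fun _ _ hij => C.1.2.injective (congrArg Subtype.val hij), fun p =>
      (C.1.2.mem_parts_iff_of_toFinpartition_eq C.2).1 p.2 |>.imp fun _ hi => Subtype.ext hi⟩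
  invFun e := ⟨⟨fun i => e i, π.isOrderedPartition_coe_equiv e⟩,
    Finpartition.ext (image_univ_coe_equiv π.parts e)⟩
  left_inv _ := rfl
  right_inv _ := Equiv.ext fun _ => rfl

theorem card_isOrderedPartition_eq_factorial_mul [Fintype ι] [DecidableEq ι] (s : Finset α) :
    Nat.card {C : ι → Finset α // IsOrderedPartition s C} =
      (Fintype.card ι)! * Nat.card {π : Finpartition s // π.parts.card = Fintype.card ι} := by
  let proj (C : {C : ι → Finset α // IsOrderedPartition s C}) :
      {π : Finpartition s // π.parts.card = Fintype.card ι} :=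
    ⟨C.2.toFinpartition, C.2.card_parts_toFinpartition⟩
  let fiberEquiv (π : {π : Finpartition s // π.parts.card = Fintype.card ι}) :
      {C // proj C = π} ≃ (ι ≃ π.1.parts) :=
    (Equiv.subtypeEquivRight fun _ => Subtype.ext_iff).trans (toFinpartitionFiberEquiv π.1)
  have (π : {π : Finpartition s // π.parts.card = Fintype.card ι}) : Finite {C // proj C = π} :=
    .of_equiv _ (fiberEquiv π).symm
  have card_fiber (π : {π : Finpartition s // π.parts.card = Fintype.card ι}) :
      Nat.card {C // proj C = π} = (Fintype.card ι)! := by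
    rw [Nat.card_congr (fiberEquiv π), Nat.card_eq_fintype_card,
      Fintype.card_equiv (Fintype.equivOfCardEq (by rw [Fintype.card_coe, π.2]))]
  rw [← Nat.card_congr (Equiv.sigmaFiberEquiv proj), Nat.card_sigma]
  simp only [card_fiber, sum_const, smul_eq_mul, card_univ, Nat.card_eq_fintype_card, mul_comm]

namespace IsOrderedPartition

variable [Fintype α] [Fintype ι] {C : ι → Finset α}

def index (h : IsOrderedPartition univ C) (a : α) : ι :=
  Fintype.choose _ (h.existsUnique_mem (mem_univ a))

theorem mem_index (h : IsOrderedPartition univ C) (a : α) : a ∈ C (h.index a) :=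
  Fintype.choose_spec (fun i => a ∈ C i) _

theorem index_eq_iff (h : IsOrderedPartition univ C) {a : α} {i : ι} :
    h.index a = i ↔ a ∈ C i :=
  ⟨fun hi => hi ▸ h.mem_index a, (h.existsUnique_mem (mem_univ a)).unique (h.mem_index a)⟩

end IsOrderedPartition

def surjectiveEquivIsOrderedPartition [Fintype α] [Fintype ι] [DecidableEq ι] :
    {f : α → ι // Surjective f} ≃ {C : ι → Finset α // IsOrderedPartition univ C} where
  toFun f := ⟨fun i => {a | f.1 a = i}, fun i => (f.2 i).imp fun a ha => by simpa using ha,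
    fun i j hij => disjoint_filter.2 fun a _ hi hj => hij (hi ▸ hj), by ext a; simp⟩
  invFun C := ⟨C.2.index, fun i => (C.2.1 i).imp fun _ ha => C.2.index_eq_iff.2 ha⟩
  left_inv f := Subtype.ext <| funext fun a => by
    simp [IsOrderedPartition.index_eq_iff]
  right_inv C := Subtype.ext <| funext fun i => by
    ext a
    simp [IsOrderedPartition.index_eq_iff]

theorem isOrderedPartition_sum_elim_iff [Fintype α] [Fintype ι] [Fintype κ] {C : ι → Finset α}
    {B : κ → Finset α} :
    IsOrderedPartition univ (Sum.elim C B) ↔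
      ((∀ j, (B j).Nonempty) ∧ ∀ i j, i ≠ j → Disjoint (B i) (B j)) ∧
        IsOrderedPartition (univ \ univ.biUnion B) C := by
  constructor
  · rintro ⟨hne, hdisj, hcover⟩
    refine ⟨⟨fun j => hne (.inr j), fun i j hij => hdisj (.inr i) (.inr j) (by simpa)⟩,
      fun i => hne (.inl i), fun i j hij => hdisj (.inl i) (.inl j) (by simpa), ?_⟩
    ext a
    simp only [mem_biUnion, mem_univ, true_and, mem_sdiff, not_exists]
    constructor
    · rintro ⟨i, hi⟩ j hj
      exact disjoint_left.1 (hdisj (.inl i) (.inr j) Sum.inl_ne_inr) hi hj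
    · intro ha
      obtain ⟨i | j, -, hx⟩ := mem_biUnion.1 (hcover ▸ mem_univ a)
      exacts [⟨i, hx⟩, (ha j hx).elim]
  · rintro ⟨⟨hBne, hBdisj⟩, hCne, hCdisj, hCcover⟩
    have hCB (i j) : Disjoint (C i) (B j) := by
      have hCi : C i ⊆ univ \ univ.biUnion B := hCcover ▸ subset_biUnion_of_mem C (mem_univ i)
      exact disjoint_of_subset_left hCi (disjoint_sdiff_self_left.mono_right
        (subset_biUnion_of_mem B (mem_univ j)))
    refine ⟨Sum.forall.2 ⟨hCne, hBne⟩, ?_, ?_⟩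
    · rintro (i | i) (j | j) hij
      exacts [hCdisj i j (by simpa using hij), hCB i j, (hCB j i).symm,
        hBdisj i j (by simpa using hij)]
    · refine eq_univ_of_forall fun a => ?_
      by_cases ha : a ∈ univ.biUnion B
      · obtain ⟨j, -, hj⟩ := mem_biUnion.1 ha
        exact mem_biUnion.2 ⟨.inr j, mem_univ _, hj⟩
      · obtain ⟨i, -, hi⟩ := mem_biUnion.1 (hCcover ▸ mem_sdiff.2 ⟨mem_univ a, ha⟩)
        exact mem_biUnion.2 ⟨.inl i, mem_univ _, hi⟩

def isOrderedPartitionSumEquiv [Fintype α] [Fintype ι] [Fintype κ] :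
    {D : ι ⊕ κ → Finset α // IsOrderedPartition univ D} ≃
      Σ B : {B : κ → Finset α // (∀ j, (B j).Nonempty) ∧ ∀ i j, i ≠ j → Disjoint (B i) (B j)},
        {C : ι → Finset α // IsOrderedPartition (univ \ univ.biUnion B.1) C} where
  toFun D :=
    have h := isOrderedPartition_sum_elim_iff.1 ((Sum.elim_comp_inl_inr D.1).symm ▸ D.2)
    ⟨⟨D.1 ∘ .inr, h.1⟩, ⟨D.1 ∘ .inl, h.2⟩⟩
  invFun BC := ⟨Sum.elim BC.2.1 BC.1.1, isOrderedPartition_sum_elim_iff.2 ⟨BC.1.2, BC.2.2⟩⟩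
  left_inv D := Subtype.ext (Sum.elim_comp_inl_inr D.1)
  right_inv _ := rfl

end OrderedPartition

theorem mixedStirling_succ_eq_card_sigma (n m r : ℕ) :
    mixedStirling n (m + 1) r = Nat.card (Σ B : {B : Fin m → Finset (Fin n) //
      (∀ j, (B j).Nonempty) ∧ ∀ i j, i ≠ j → Disjoint (B i) (B j)},
        {π : Finpartition (univ \ univ.biUnion B.1) // π.parts.card = r}) :=
  Nat.card_congr
    { toFun x := ⟨⟨x.1.1, x.2.1, x.2.2.1⟩, ⟨x.1.2, x.2.2.2⟩⟩
      invFun y := ⟨⟨y.1.1, y.2.1⟩, y.1.2.1, y.1.2.2, y.2.2⟩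
      left_inv _ := rfl
      right_inv _ := rfl }

theorem card_surjective_fin_add_eq_factorial_mul_mixedStirling (n r m : ℕ) :
    Nat.card {f : Fin n → Fin (r + m) // Surjective f} = r ! * mixedStirling n (m + 1) r := by
  rw [card_surjective_congr finSumFinEquiv.symm,
    Nat.card_congr surjectiveEquivIsOrderedPartition, Nat.card_congr isOrderedPartitionSumEquiv,
    Nat.card_sigma, mixedStirling_succ_eq_card_sigma, Nat.card_sigma, mul_sum]
  simp only [card_isOrderedPartition_eq_factorial_mul, Fintype.card_fin]

theorem mixedStirling_egf_general (k r : ℕ) (hk : 1 ≤ k) :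
    (PowerSeries.mk fun n => (mixedStirling n k r : ℚ) / n.factorial) =
      PowerSeries.C ((r.factorial : ℚ))⁻¹ *
        (PowerSeries.exp ℚ - 1) ^ (r + k - 1) := by
  obtain ⟨m, rfl⟩ := Nat.exists_eq_add_of_le' hk
  rw [Nat.add_sub_assoc hk, Nat.add_sub_cancel, ← surjectionEGF_eq_exp_sub_one_pow]
  ext n
  rw [surjectionEGF, coeff_mk, coeff_C_mul, coeff_mk,
    card_surjective_fin_add_eq_factorial_mul_mixedStirling, Nat.cast_mul]
  field_simp

theorem mixedStirling_egf (k r : ℕ) (hk : 1 ≤ k) (hr : 1 ≤ r) :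
    (PowerSeries.mk fun n => (mixedStirling n k r : ℚ) / n.factorial) =
      PowerSeries.C ((r.factorial : ℚ))⁻¹ *
        (PowerSeries.exp ℚ - 1) ^ (r + k - 1) :=
  mixedStirling_egf_general k r hk
end

section
/- For integers n ≥ 0, k ≥ 1 and 1 ≤ ℓ ≤ m, the doubly restricted Stirling numbers of the second kind satisfy the recurrence {n+1 brace k}_{≤m}^{≥ℓ} = Σ_{i=ℓ−1}^{m−1} (n choose i) · {n−i brace k−1}_{≤m}^{≥ℓ}, where the binomial coefficient (n choose i) is 0 for i > n and terms with n−i < 0 are taken to be 0. -/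
/-- The doubly restricted Stirling number of the second kind `{n brace k}_{≤ m}^{≥ ℓ}`: the
number of partitions of an `n`-element set into exactly `k` nonempty blocks such that each
block contains at least `ℓ` and at most `m` elements. -/
noncomputable def stirlingBetween (l m n k : ℕ) : ℕ :=
  Nat.card {P : Finpartition (Finset.univ : Finset (Fin n)) //
    P.parts.card = k ∧ ∀ B ∈ P.parts, l ≤ B.card ∧ B.card ≤ m}

/-! Classify the partitions of an `(n + 1)`-set by the block containing a fixed element: if that
block has `i + 1` elements, it is chosen in `n.choose i` ways, and the remaining `n - i` elements
are partitioned into `k - 1` admissible blocks. The complement of a block is not a `Fin (n - i)`,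
so the count is first shown, by induction on `k`, to equal a recursively defined function
`restrictedStirling` of the size alone, for finsets of any type. -/

open Finset

namespace Finpartition

variable {α : Type*} [DecidableEq α] {s B : Finset α}

theorem parts_avoid_of_mem (P : Finpartition s) (hB : B ∈ P.parts) :
    (P.avoid B).parts = P.parts.erase B := by
  ext C
  simp only [mem_avoid, mem_erase]
  constructor
  · rintro ⟨D, hD, hDB, rfl⟩
    have hne : D ≠ B := by rintro rfl; exact hDB le_rfl
    have hdisj : Disjoint D B := P.disjoint hD hB hne
    rw [hdisj.sdiff_eq_left]
    exact ⟨hne, hD⟩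
  · rintro ⟨hne, hC⟩
    have hdisj : Disjoint C B := P.disjoint hC hB hne
    exact ⟨C, hC, fun hle ↦ P.ne_bot hC (hdisj.eq_bot_of_le hle), hdisj.sdiff_eq_left⟩

end Finpartition

theorem Finset.sum_powerset_filter_mem_apply_card {α M : Type*} [DecidableEq α] [AddCommMonoid M]
    {s : Finset α} {a : α} (ha : a ∈ s) (p : ℕ → Prop) [DecidablePred p] (g : ℕ → M) :
    ∑ B ∈ s.powerset with a ∈ B ∧ p #B, g #B =
      ∑ j ∈ range #s with p (j + 1), (#s - 1).choose j • g (j + 1) := by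
  obtain ⟨t, hat, rfl⟩ : ∃ t, a ∉ t ∧ s = insert a t :=
    ⟨s.erase a, notMem_erase a s, (insert_erase ha).symm⟩
  have hnot : ∀ B ∈ t.powerset, a ∉ B := fun B hB haB ↦ hat (mem_powerset.1 hB haB)
  rw [card_insert_of_notMem hat, Nat.add_sub_cancel, sum_filter, sum_filter,
    sum_powerset_insert hat, sum_eq_zero fun B hB ↦ if_neg fun h ↦ hnot B hB h.1, zero_add]
  calc ∑ B ∈ t.powerset, (if a ∈ insert a B ∧ p #(insert a B) then g #(insert a B) else 0)
      = ∑ B ∈ t.powerset, (if p (#B + 1) then g (#B + 1) else 0) :=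
        sum_congr rfl fun B hB ↦ by simp [card_insert_of_notMem (hnot B hB)]
    _ = _ := by simp only [sum_powerset_apply_card (fun j ↦ if p (j + 1) then g (j + 1) else 0),
        smul_ite, smul_zero]

variable {α : Type*} [DecidableEq α]

abbrev RestrictedFinpartition (p : ℕ → Prop) (s : Finset α) (k : ℕ) : Type _ :=
  {P : Finpartition s // #P.parts = k ∧ ∀ B ∈ P.parts, p #B}

/-- The block of a fixed element of an `n`-set has `j + 1` elements, the other `j` of which are
chosen in `(n - 1).choose j` ways. -/
def restrictedStirling (p : ℕ → Prop) [DecidablePred p] : ℕ → ℕ → ℕ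
  | n, 0 => if n = 0 then 1 else 0
  | n, k + 1 => ∑ j ∈ range n with p (j + 1), (n - 1).choose j * restrictedStirling p (n - (j + 1)) k

namespace RestrictedFinpartition

variable {p : ℕ → Prop} {s : Finset α} {k : ℕ}

def avoidEquiv {B : Finset α} {a : α} (hB : B ⊆ s) (ha : a ∈ B) (hpB : p #B) :
    {P : RestrictedFinpartition p s (k + 1) // P.1.part a = B} ≃
      RestrictedFinpartition p (s \ B) k where
  toFun P :=
    have hmem : B ∈ P.1.1.parts := by simpa [P.2] using P.1.1.part_mem.2 (hB ha)
    have hparts := Finpartition.parts_avoid_of_mem _ hmem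
    ⟨P.1.1.avoid B, by rw [hparts, card_erase_of_mem hmem, P.1.2.1]; rfl,
      fun C hC ↦ P.1.2.2 C (mem_of_mem_erase (hparts ▸ hC))⟩
  invFun Q :=
    have hparts : (Q.1.extend (ne_empty_of_mem ha) sdiff_disjoint (sdiff_sup_cancel hB)).parts =
        insert B Q.1.parts := rfl
    ⟨⟨Q.1.extend (ne_empty_of_mem ha) sdiff_disjoint (sdiff_sup_cancel hB),
        by rw [Finpartition.card_extend, Q.2.1],
        fun C hC ↦ (mem_insert.1 (hparts ▸ hC)).elim (fun h : C = B ↦ h ▸ hpB) (Q.2.2 C)⟩,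
      Finpartition.part_eq_of_mem _ (hparts ▸ mem_insert_self B _) ha⟩
  left_inv P := by
    have hmem : B ∈ P.1.1.parts := by simpa [P.2] using P.1.1.part_mem.2 (hB ha)
    refine Subtype.ext <| Subtype.ext <| Finpartition.ext ?_
    change insert B (P.1.1.avoid B).parts = P.1.1.parts
    rw [Finpartition.parts_avoid_of_mem _ hmem, insert_erase hmem]
  right_inv Q := by
    have hB_notMem : B ∉ Q.1.parts := fun h ↦ (mem_sdiff.1 (Q.1.le h ha)).2 ha
    refine Subtype.ext <| Finpartition.ext ?_
    change (Finpartition.avoid _ B).parts = Q.1.parts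
    rw [Finpartition.parts_avoid_of_mem _ (mem_insert_self B _), Finpartition.extend_parts,
      erase_insert hB_notMem]

theorem card_succ [DecidablePred p] {a : α} (ha : a ∈ s) :
    Nat.card (RestrictedFinpartition p s (k + 1)) =
      ∑ B ∈ s.powerset with a ∈ B ∧ p #B, Nat.card (RestrictedFinpartition p (s \ B) k) := by
  let blockOf (P : RestrictedFinpartition p s (k + 1)) : {B ∈ s.powerset | a ∈ B ∧ p #B} :=
    ⟨P.1.part a, mem_filter.2 ⟨mem_powerset.2 (P.1.le (P.1.part_mem.2 ha)),
      P.1.mem_part_self.2 ha, P.2.2 _ (P.1.part_mem.2 ha)⟩⟩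
  rw [← Nat.card_congr (Equiv.sigmaFiberEquiv blockOf), Nat.card_sigma,
    ← sum_coe_sort {B ∈ s.powerset | a ∈ B ∧ p #B}]
  refine sum_congr rfl fun B _ ↦ Nat.card_congr ?_
  have hB := mem_filter.1 B.2
  exact (Equiv.subtypeEquivRight fun P ↦ Subtype.ext_iff).trans
    (avoidEquiv (mem_powerset.1 hB.1) hB.2.1 hB.2.2)

theorem card_zero :
    Nat.card (RestrictedFinpartition p s 0) = if s = ∅ then 1 else 0 := by
  split_ifs with hs
  · subst hs
    have : Unique (RestrictedFinpartition p ∅ 0) :=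
      ⟨⟨⟨Finpartition.empty _, rfl, by simp⟩⟩,
        fun P ↦ Subtype.ext (Subsingleton.elim (α := Finpartition (⊥ : Finset α)) _ _)⟩
    exact Nat.card_unique
  · have : IsEmpty (RestrictedFinpartition p s 0) :=
      ⟨fun P ↦ (P.1.parts_nonempty hs).ne_empty (card_eq_zero.1 P.2.1)⟩
    exact Nat.card_of_isEmpty

theorem card_empty_succ :
    Nat.card (RestrictedFinpartition p (∅ : Finset α) (k + 1)) = 0 := by
  have : IsEmpty (RestrictedFinpartition p (∅ : Finset α) (k + 1)) :=
    ⟨fun P ↦ by simpa [P.2.1] using P.1.card_parts_le_card⟩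
  exact Nat.card_of_isEmpty

theorem card_eq_restrictedStirling (p : ℕ → Prop) [DecidablePred p] (s : Finset α) (k : ℕ) :
    Nat.card (RestrictedFinpartition p s k) = restrictedStirling p #s k := by
  induction k generalizing s with
  | zero => rw [card_zero]; simp [restrictedStirling]
  | succ k ih =>
    obtain rfl | ⟨a, ha⟩ := s.eq_empty_or_nonempty
    · rw [card_empty_succ]; simp [restrictedStirling]
    calc Nat.card (RestrictedFinpartition p s (k + 1))
        = ∑ B ∈ s.powerset with a ∈ B ∧ p #B, restrictedStirling p (#s - #B) k := by
          rw [card_succ ha]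
          refine sum_congr rfl fun B hB ↦ ?_
          rw [ih, card_sdiff_of_subset (mem_powerset.1 (mem_filter.1 hB).1)]
      _ = restrictedStirling p #s (k + 1) := by
          rw [sum_powerset_filter_mem_apply_card ha p (fun c ↦ restrictedStirling p (#s - c) k)]
          simp only [restrictedStirling, smul_eq_mul]

end RestrictedFinpartition

theorem stirlingBetween_eq_restrictedStirling (l m n k : ℕ) :
    stirlingBetween l m n k = restrictedStirling (fun c ↦ l ≤ c ∧ c ≤ m) n k :=
  (RestrictedFinpartition.card_eq_restrictedStirling (fun c ↦ l ≤ c ∧ c ≤ m)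
    (univ : Finset (Fin n)) k).trans (by rw [card_univ, Fintype.card_fin])

theorem stirlingBetween_recurrence (n k l m : ℕ) (hk : 1 ≤ k) (hl : 1 ≤ l) (hlm : l ≤ m) :
    stirlingBetween l m (n + 1) k =
      ∑ i ∈ Finset.Icc (l - 1) (m - 1),
        n.choose i * stirlingBetween l m (n - i) (k - 1) := by
  obtain ⟨k, rfl⟩ := Nat.exists_eq_add_of_le' hk
  simp only [stirlingBetween_eq_restrictedStirling, restrictedStirling, Nat.add_sub_cancel,
    Nat.add_sub_add_right]
  refine sum_subset (fun j hj ↦ ?_) (fun j hj hj' ↦ ?_)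
  · simp only [mem_filter, mem_range, mem_Icc] at hj ⊢
    omega
  · have hnj : n < j := by
      simp only [mem_filter, mem_range, mem_Icc, not_and] at hj hj'
      omega
    rw [Nat.choose_eq_zero_of_lt hnj, zero_mul]
end
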